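/- arXiv:1804.08441 — 6 statements merged into one kernel-verified Lean document; each statement's English description precedes it below -/
import Mathlib

section
/- Let d : ℕ → ℂ satisfy d(0) = d(1) = d(2) = 1 and d(n+3) = d(n+1) + 2·d(n) for all n ≥ 0. Then for every n ≥ 0, d(n) = ((4λ² + λ + 6)/26)·λⁿ + ((4μ² + μ + 6)/26)·μⁿ + ((4μ̄² + μ̄ + 6)/26)·μ̄ⁿ. -/
/-- If `d : ℕ → ℂ` satisfies `d(0)=d(1)=d(2)=1` and `d(n+3) = d(n+1) + 2 d(n)`, then
`d(n) = ((4λ²+λ+6)/26) λⁿ + ((4μ²+μ+6)/26) μⁿ + ((4μ̄²+μ̄+6)/26) μ̄ⁿ`, where `λ` is the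
real root of `t³ − t − 2` and `μ`, `μ̄` its non-real complex conjugate roots. -/
theorem stmt_4 (lam : ℝ) (hlam : lam ^ 3 - lam - 2 = 0)
    (mu : ℂ) (hmu : mu ^ 3 - mu - 2 = 0) (hmuim : 0 < mu.im)
    (d : ℕ → ℂ) (hd0 : d 0 = 1) (hd1 : d 1 = 1) (hd2 : d 2 = 1)
    (hrec : ∀ n : ℕ, d (n + 3) = d (n + 1) + 2 * d n) :
    ∀ n : ℕ,
      d n = ((4 * (lam : ℂ) ^ 2 + (lam : ℂ) + 6) / 26) * (lam : ℂ) ^ n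
          + ((4 * mu ^ 2 + mu + 6) / 26) * mu ^ n
          + ((4 * ((starRingEnd ℂ) mu) ^ 2 + (starRingEnd ℂ) mu + 6) / 26) *
              ((starRingEnd ℂ) mu) ^ n := by
  set l : ℂ := (lam : ℂ) with hl
  set nu : ℂ := (starRingEnd ℂ) mu with hnu_def
  have hlamC : l ^ 3 - l - 2 = 0 := by
    have h : ((lam ^ 3 - lam - 2 : ℝ) : ℂ) = 0 := by rw [hlam]; norm_num
    push_cast at h
    rw [hl]; linear_combination h
  have hnu : nu ^ 3 - nu - 2 = 0 := by
    rw [hnu_def]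
    have := congrArg (starRingEnd ℂ) hmu
    simpa [map_sub, map_pow, map_ofNat] using this
  have hnuim : nu.im = -mu.im := by simp [hnu_def]
  have hlm : l ≠ mu := by
    intro h
    have : l.im = mu.im := by rw [h]
    simp [hl] at this
    exact absurd this.symm (ne_of_gt hmuim)
  have hln : l ≠ nu := by
    intro h
    have : l.im = nu.im := by rw [h]
    rw [hnuim] at this
    simp [hl] at this
    exact absurd this (ne_of_gt hmuim)
  have hmn : mu ≠ nu := by
    intro h
    have : mu.im = nu.im := by rw [h]
    rw [hnuim] at this
    nlinarith [hmuim]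
  -- q relations
  have hqlm : l ^ 2 + l * mu + mu ^ 2 - 1 = 0 := by
    have h : (l - mu) * (l ^ 2 + l * mu + mu ^ 2 - 1) = 0 := by
      linear_combination hlamC - hmu
    rcases mul_eq_zero.mp h with h | h
    · exact absurd (sub_eq_zero.mp h) hlm
    · exact h
  have hqln : l ^ 2 + l * nu + nu ^ 2 - 1 = 0 := by
    have h : (l - nu) * (l ^ 2 + l * nu + nu ^ 2 - 1) = 0 := by
      linear_combination hlamC - hnu
    rcases mul_eq_zero.mp h with h | h
    · exact absurd (sub_eq_zero.mp h) hln
    · exact h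
  have he1 : l + mu + nu = 0 := by
    have h : (mu - nu) * (l + mu + nu) = 0 := by
      linear_combination hqlm - hqln
    rcases mul_eq_zero.mp h with h | h
    · exact absurd (sub_eq_zero.mp h) hmn
    · exact h
  have hn : nu = -(l + mu) := by linear_combination he1
  set f : ℕ → ℂ := fun n =>
      ((4 * l ^ 2 + l + 6) / 26) * l ^ n
      + ((4 * mu ^ 2 + mu + 6) / 26) * mu ^ n
      + ((4 * nu ^ 2 + nu + 6) / 26) * nu ^ n with hf
  have hf0 : f 0 = 1 := by
    rw [hf]; simp only [pow_zero]
    rw [hn]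
    linear_combination (8 / 26 : ℂ) * hqlm
  have hf1 : f 1 = 1 := by
    rw [hf]; simp only [pow_one]
    rw [hn]
    linear_combination (12 / 26 : ℂ) * hlamC + ((2 - 12 * l) / 26) * hqlm
  have hf2 : f 2 = 1 := by
    rw [hf]
    rw [hn]
    linear_combination (3 / 26 : ℂ) * hlamC
      + ((20 + 8 * mu ^ 2 - 3 * l + 8 * l * mu + 8 * l ^ 2) / 26) * hqlm
  have hfrec : ∀ n : ℕ, f (n + 3) = f (n + 1) + 2 * f n := by
    intro n
    simp only [hf]
    linear_combination (((4 * l ^ 2 + l + 6) / 26) * l ^ n) * hlamC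
      + (((4 * mu ^ 2 + mu + 6) / 26) * mu ^ n) * hmu
      + (((4 * nu ^ 2 + nu + 6) / 26) * nu ^ n) * hnu
  have key : ∀ n : ℕ, d n = f n ∧ d (n + 1) = f (n + 1) ∧ d (n + 2) = f (n + 2) := by
    intro n
    induction n with
    | zero => exact ⟨by rw [hd0, hf0], by rw [hd1, hf1], by rw [hd2, hf2]⟩
    | succ k ih =>
      refine ⟨ih.2.1, ih.2.2, ?_⟩
      have : k + 1 + 2 = k + 3 := by ring
      rw [this, hrec k, hfrec k, ih.1, ih.2.1]
  exact fun n => (key n).1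
end

section
/- There exists a family of cardinality continuum of pairwise distinct two-dimensional linear subspaces (planes through the origin) of ℝ³, each containing the vector (2/λ, λ, 1), such that every plane in the family intersects the integer lattice ℤ³ only at the origin. -/
open Polynomial in
/-- `1, λ, λ²` are linearly independent over the integers. -/
lemma int_indep (lam : ℝ) (hlam : lam ^ 3 - lam - 2 = 0) (a b c : ℤ)
    (h : (a : ℝ) + b * lam + c * lam ^ 2 = 0) : a = 0 ∧ b = 0 ∧ c = 0 := by
  set p : ℚ[X] := X ^ 3 - X - C 2 with hp
  have hmonic : p.Monic := by unfold p; monicity!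
  have hdeg : p.natDegree = 3 := by unfold p; compute_degree!
  have hdeg' : p.degree = 3 := by rw [Polynomial.degree_eq_natDegree hmonic.ne_zero, hdeg]; rfl
  have hirr : Irreducible p := by
    rw [Polynomial.irreducible_iff_roots_eq_zero_of_degree_le_three (by omega) (by omega)]
    rw [Multiset.eq_zero_iff_forall_notMem]
    intro r hr
    rw [Polynomial.mem_roots hmonic.ne_zero, Polynomial.IsRoot] at hr
    have hev : r ^ 3 - r - 2 = 0 := by
      have := hr; simp [hp, Polynomial.eval_sub, Polynomial.eval_pow] at this
      linarith
    have haev : Polynomial.aeval r ((X : ℤ[X]) ^ 3 - X - C 2) = 0 := by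
      simp only [map_sub, map_pow, Polynomial.aeval_X, Polynomial.aeval_C, map_ofNat]
      linarith
    have hint : IsLocalization.IsInteger ℤ r :=
      isInteger_of_is_root_of_monic (by monicity!) haev
    obtain ⟨n, hn⟩ := hint
    have hnr : (n : ℚ) = r := by exact_mod_cast hn
    have hne : (n : ℚ) ^ 3 - n - 2 = 0 := by rw [hnr]; exact hev
    have hnz : n ^ 3 - n - 2 = 0 := by exact_mod_cast hne
    have h1 : n ≤ 2 := by nlinarith [sq_nonneg n, sq_nonneg (n - 1), sq_nonneg (n + 1)]
    have h2 : -2 ≤ n := by nlinarith [sq_nonneg n, sq_nonneg (n - 1), sq_nonneg (n + 1)]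
    interval_cases n <;> omega
  have haev : Polynomial.aeval lam p = 0 := by
    simp only [hp, map_sub, map_pow, Polynomial.aeval_X, Polynomial.aeval_C, map_ofNat]
    linarith
  have hmin : minpoly ℚ lam = p := (minpoly.eq_of_irreducible_of_monic hirr haev hmonic).symm
  by_contra hcon
  set q : ℚ[X] := C (a : ℚ) + C (b : ℚ) * X + C (c : ℚ) * X ^ 2 with hq
  have hq0 : q ≠ 0 := by
    intro h0
    have c0 : (a : ℚ) = 0 := by
      have := congrArg (fun r => Polynomial.coeff r 0) h0
      simp only [hq, Polynomial.coeff_add, Polynomial.coeff_C_mul, Polynomial.coeff_X_pow,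
        Polynomial.coeff_X_zero, Polynomial.coeff_C_zero, Polynomial.coeff_zero] at this
      simpa using this
    have c1 : (b : ℚ) = 0 := by
      have := congrArg (fun r => Polynomial.coeff r 1) h0
      simp only [hq, Polynomial.coeff_add, Polynomial.coeff_C_mul, Polynomial.coeff_X_pow,
        Polynomial.coeff_X_one, Polynomial.coeff_C, Polynomial.coeff_zero] at this
      simpa using this
    have c2 : (c : ℚ) = 0 := by
      have := congrArg (fun r => Polynomial.coeff r 2) h0
      simp only [hq, Polynomial.coeff_add, Polynomial.coeff_C_mul, Polynomial.coeff_X_pow,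
        Polynomial.coeff_X, Polynomial.coeff_C, Polynomial.coeff_zero] at this
      simpa using this
    exact hcon ⟨by exact_mod_cast c0, by exact_mod_cast c1, by exact_mod_cast c2⟩
  have haevq : Polynomial.aeval lam q = 0 := by
    simp only [hq, map_add, map_mul, map_pow, Polynomial.aeval_X, Polynomial.aeval_C,
      map_intCast]
    linarith [h]
  have hle : (minpoly ℚ lam).degree ≤ q.degree := minpoly.degree_le_of_ne_zero ℚ lam hq0 haevq
  have hqd : q.degree ≤ 2 := by unfold q; compute_degree
  rw [hmin, hdeg'] at hle
  have : (3 : WithBot ℕ) ≤ 2 := le_trans hle hqd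
  norm_num at this

/-- The linear functional `x ↦ a 0 * x 0 + a 1 * x 1 + a 2 * x 2`. -/
noncomputable def dotL (a : Fin 3 → ℝ) : (Fin 3 → ℝ) →ₗ[ℝ] ℝ where
  toFun x := a 0 * x 0 + a 1 * x 1 + a 2 * x 2
  map_add' x y := by simp only [Pi.add_apply]; ring
  map_smul' r x := by simp only [Pi.smul_apply, smul_eq_mul, RingHom.id_apply]; ring

/-- There is a family of cardinality continuum of pairwise distinct two-dimensional
linear subspaces of `ℝ³`, each containing the vector `(2/λ, λ, 1)` (where `λ` is the
real root of `t³ − t − 2`), such that each plane of the family intersects the integer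
lattice `ℤ³` only at the origin. -/
theorem stmt_6 (lam : ℝ) (hlam : lam ^ 3 - lam - 2 = 0) :
    ∃ S : Set (Submodule ℝ (Fin 3 → ℝ)),
      Cardinal.mk S = Cardinal.continuum ∧
      ∀ W ∈ S, Module.finrank ℝ ↥W = 2 ∧
        (![2 / lam, lam, 1] ∈ W) ∧
        (∀ x ∈ W, (∀ i : Fin 3, ∃ z : ℤ, x i = (z : ℝ)) → x = 0) := by
  classical
  have h2 : lam * (lam ^ 2 - 1) = 2 := by nlinarith [hlam]
  have hl0 : lam ≠ 0 := by intro h; rw [h] at h2; norm_num at h2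
  have hm0 : lam ^ 2 - 1 ≠ 0 := by intro h; rw [h] at h2; norm_num at h2
  set n : ℝ → (Fin 3 → ℝ) := fun t => ![lam + t, -(lam ^ 2 - 1), -(t * (lam ^ 2 - 1))] with hn
  set W : ℝ → Submodule ℝ (Fin 3 → ℝ) := fun t => LinearMap.ker (dotL (n t)) with hWdef
  have hmem : ∀ t x, x ∈ W t ↔
      (lam + t) * x 0 - (lam ^ 2 - 1) * x 1 - t * (lam ^ 2 - 1) * x 2 = 0 := by
    intro t x
    simp only [hWdef, LinearMap.mem_ker, dotL, LinearMap.coe_mk, AddHom.coe_mk, hn,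
      Matrix.cons_val_zero, Matrix.cons_val_one, Matrix.head_cons, Matrix.cons_val_two,
      Matrix.tail_cons]
    constructor <;> intro h <;> linarith
  -- integer vectors orthogonal to both `u` and `w` vanish
  have hzero : ∀ z : Fin 3 → ℤ,
      lam * (z 0 : ℝ) - (lam ^ 2 - 1) * z 1 = 0 →
      (z 0 : ℝ) - (lam ^ 2 - 1) * z 2 = 0 → z = 0 := by
    intro z e1 e2
    obtain ⟨a1, a2, _⟩ := int_indep lam hlam (z 1) (z 0) (-(z 1)) (by push_cast; linarith)
    have hz1 : z 1 = 0 := a1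
    have hz0 : z 0 = 0 := a2
    have hz2 : (lam ^ 2 - 1) * (z 2 : ℝ) = 0 := by
      rw [hz0] at e2; push_cast at e2 ⊢; linarith
    have hz2' : (z 2 : ℝ) = 0 := by
      rcases mul_eq_zero.mp hz2 with h | h
      · exact absurd h hm0
      · exact h
    have hz2'' : z 2 = 0 := by exact_mod_cast hz2'
    funext i
    fin_cases i <;> simp [hz0, hz1, hz2'']
  -- the countable bad set
  set B : Set ℝ := {t | ∃ z : Fin 3 → ℤ, z ≠ 0 ∧
    (lam + t) * (z 0 : ℝ) - (lam ^ 2 - 1) * z 1 - t * (lam ^ 2 - 1) * z 2 = 0} with hB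
  have hBc : B.Countable := by
    have hsub : B ⊆ ⋃ z : Fin 3 → ℤ, {t : ℝ | z ≠ 0 ∧
        (lam + t) * (z 0 : ℝ) - (lam ^ 2 - 1) * z 1 - t * (lam ^ 2 - 1) * z 2 = 0} := by
      intro t ht
      obtain ⟨z, hz⟩ := ht
      exact Set.mem_iUnion.mpr ⟨z, hz⟩
    refine Set.Countable.mono hsub (Set.countable_iUnion fun z => ?_)
    apply Set.Subsingleton.countable
    intro t ht s hs
    by_contra hts
    have hts' : t - s ≠ 0 := sub_ne_zero.mpr hts
    have hkey : (z 0 : ℝ) - (lam ^ 2 - 1) * z 2 = 0 := by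
      have hmul : (t - s) * ((z 0 : ℝ) - (lam ^ 2 - 1) * z 2) = 0 := by
        linear_combination ht.2 - hs.2
      exact (mul_eq_zero.mp hmul).resolve_left hts'
    have hkey2 : lam * (z 0 : ℝ) - (lam ^ 2 - 1) * z 1 = 0 := by
      linear_combination ht.2 - t * hkey
    exact ht.1 (hzero z hkey2 hkey)
  -- cardinality of the complement
  have hG : Cardinal.mk ↥(Bᶜ) = Cardinal.continuum := by
    refine le_antisymm ?_ ?_
    · calc Cardinal.mk ↥(Bᶜ) ≤ Cardinal.mk ℝ := Cardinal.mk_set_le _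
        _ = Cardinal.continuum := Cardinal.mk_real
    · by_contra hlt
      push_neg at hlt
      have hBlt : Cardinal.mk ↥B < Cardinal.continuum :=
        lt_of_le_of_lt hBc.le_aleph0 Cardinal.aleph0_lt_continuum
      have := Cardinal.mk_sum_compl B
      rw [Cardinal.mk_real] at this
      have hsum : Cardinal.mk ↥B + Cardinal.mk ↥(Bᶜ) < Cardinal.continuum :=
        Cardinal.add_lt_of_lt Cardinal.aleph0_le_continuum hBlt hlt
      rw [this] at hsum
      exact lt_irrefl _ hsum
  -- injectivity of t ↦ W t
  have hinj : Function.Injective W := by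
    intro t s hW
    by_contra hts
    set y : Fin 3 → ℝ := ![(lam ^ 2 - 1) * (t * lam - 1),
      -(t * (lam ^ 2 - 1) ^ 2) - lam - t, lam ^ 2 + t * lam + (lam ^ 2 - 1) ^ 2] with hy
    have hyt : y ∈ W t := by
      rw [hmem]
      simp only [hy, Matrix.cons_val_zero, Matrix.cons_val_one, Matrix.head_cons,
        Matrix.cons_val_two, Matrix.tail_cons]
      ring
    have hys : y ∈ W s := hW ▸ hyt
    have et := (hmem t y).mp hyt
    have es := (hmem s y).mp hys
    simp only [hy, Matrix.cons_val_zero, Matrix.cons_val_one, Matrix.head_cons,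
      Matrix.cons_val_two, Matrix.tail_cons] at et es
    have hd : (s - t) * ((lam ^ 2 - 1) * (1 + lam ^ 2 + (lam ^ 2 - 1) ^ 2)) = 0 := by
      linear_combination et - es
    have hf : (lam ^ 2 - 1) * (1 + lam ^ 2 + (lam ^ 2 - 1) ^ 2) ≠ 0 :=
      mul_ne_zero hm0 (by positivity)
    rcases mul_eq_zero.mp hd with h | h
    · exact hts (sub_eq_zero.mp h).symm
    · exact hf h
  -- each W t has rank 2
  have hrank : ∀ t, Module.finrank ℝ ↥(W t) = 2 := by
    intro t
    have hne : dotL (n t) ≠ 0 := by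
      intro h0
      have := congrFun (congrArg DFunLike.coe h0) ![0, 1, 0]
      simp only [dotL, LinearMap.coe_mk, AddHom.coe_mk, hn, Matrix.cons_val_zero,
        Matrix.cons_val_one, Matrix.head_cons, Matrix.cons_val_two, Matrix.tail_cons,
        LinearMap.zero_apply] at this
      apply hm0
      linarith
    have hr1 : Module.finrank ℝ ↥(LinearMap.range (dotL (n t))) = 1 := by
      have hle : Module.finrank ℝ ↥(LinearMap.range (dotL (n t))) ≤ 1 := by
        have := Submodule.finrank_le (LinearMap.range (dotL (n t)))
        simpa using this
      have hne' : LinearMap.range (dotL (n t)) ≠ ⊥ := by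
        intro hbot
        exact hne (LinearMap.range_eq_bot.mp hbot)
      have hpos : 0 < Module.finrank ℝ ↥(LinearMap.range (dotL (n t))) := by
        rw [Module.finrank_pos_iff_exists_ne_zero]
        obtain ⟨v, hv⟩ : ∃ v, dotL (n t) v ≠ 0 := by
          by_contra hall
          push_neg at hall
          exact hne (LinearMap.ext fun v => hall v)
        exact ⟨⟨dotL (n t) v, LinearMap.mem_range_self _ v⟩, by simpa using hv⟩
      omega
    have := LinearMap.finrank_range_add_finrank_ker (dotL (n t))
    rw [hr1, Module.finrank_fin_fun] at this
    show Module.finrank ℝ ↥(LinearMap.ker (dotL (n t))) = 2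
    omega
  -- v ∈ W t
  have hv : ∀ t, ![2 / lam, lam, 1] ∈ W t := by
    intro t
    rw [hmem]
    simp only [Matrix.cons_val_zero, Matrix.cons_val_one, Matrix.head_cons,
      Matrix.cons_val_two, Matrix.tail_cons]
    have hdiv : (2 : ℝ) / lam = lam ^ 2 - 1 := by
      field_simp
      linarith
    rw [hdiv]
    ring
  refine ⟨W '' Bᶜ, ?_, ?_⟩
  · rw [Cardinal.mk_image_eq hinj]
    exact hG
  · rintro V ⟨t, htB, rfl⟩
    refine ⟨hrank t, hv t, ?_⟩
    intro x hx hxint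
    choose z hz using hxint
    by_contra hx0
    apply htB
    refine ⟨z, ?_, ?_⟩
    · intro hz0
      apply hx0
      funext i
      rw [hz i, congrFun hz0 i]
      simp
    · have := (hmem t x).mp hx
      rw [hz 0, hz 1, hz 2] at this
      exact this
end

section
/- For every integer n ≥ 1, the complex number μⁿ is not real. -/
/-- The cubic `t³ − t + 2` has no rational root. -/
lemma no_rat_root_aux_stmt7 (q : ℚ) : q^3 - q + 2 ≠ 0 := by
  intro h
  have hq : (q.num : ℚ) = q * q.den := by
    have hd0 : (q.den : ℚ) ≠ 0 := by exact_mod_cast q.den_nz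
    exact (div_eq_iff hd0).mp (Rat.num_div_den q)
  have key : (q.num : ℤ)^3 - q.num * (q.den : ℤ)^2 + 2 * (q.den : ℤ)^3 = 0 := by
    have : (q.num : ℚ)^3 - q.num * (q.den : ℚ)^2 + 2 * (q.den : ℚ)^3 = 0 := by
      rw [hq]; linear_combination (q.den : ℚ)^3 * h
    exact_mod_cast this
  have hd : (q.den : ℤ) ∣ q.num ^ 3 := ⟨q.num * q.den - 2 * q.den ^ 2, by linarith [key]⟩
  have hdn : q.den ∣ q.num.natAbs ^ 3 := by
    have := Int.natAbs_dvd_natAbs.mpr hd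
    simpa [Int.natAbs_pow] using this
  have hd1 : q.den = 1 := ((q.reduced.pow_left 3).symm).eq_one_of_dvd hdn
  have hn : q = (q.num : ℚ) := by rw [hq, hd1]; push_cast; ring
  set n := q.num with hnn
  have hni : (n : ℚ)^3 - n + 2 = 0 := by rw [← hn]; exact h
  have hint : n^3 - n + 2 = 0 := by exact_mod_cast hni
  have hb1 : -1 ≤ n := by nlinarith [sq_nonneg (n+1), sq_nonneg (n-1), sq_nonneg n]
  have hb2 : n ≤ 1 := by nlinarith [sq_nonneg (n+1), sq_nonneg (n-1), sq_nonneg n]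
  interval_cases n <;> omega

/-- For every integer `n ≥ 1`, the complex number `μⁿ` is not real, where `μ` is the
non-real root of `t³ − t − 2` with `Im μ > 0`. -/
theorem stmt_7 (mu : ℂ) (hmu : mu ^ 3 - mu - 2 = 0) (hmuim : 0 < mu.im) :
    ∀ n : ℕ, 1 ≤ n → (mu ^ n).im ≠ 0 := by
  -- First extract real equations for a = Re μ, b = Im μ.
  have h := hmu
  rw [Complex.ext_iff] at h
  obtain ⟨hre, him⟩ := h
  simp only [pow_succ, pow_zero, one_mul, Complex.mul_re, Complex.mul_im,
    Complex.sub_re, Complex.sub_im, Complex.zero_re, Complex.zero_im] at hre him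
  norm_num at hre him
  set a := mu.re with ha
  set b := mu.im with hb
  have hbne : b ≠ 0 := ne_of_gt hmuim
  have hb2 : b^2 = 3*a^2 - 1 := by
    have h0 : b * (3*a^2 - b^2 - 1) = 0 := by ring_nf; ring_nf at him; linarith
    rcases mul_eq_zero.mp h0 with h1 | h1
    · exact absurd h1 hbne
    · linarith
  have hcubic : 8*a^3 - 2*a + 2 = 0 := by nlinarith [hre, hb2]
  -- μⁿ = x + yμ + zμ² with x even and y+z odd.
  have key : ∀ n : ℕ, 1 ≤ n → ∃ x y z : ℤ,
      mu ^ n = (x : ℂ) + y * mu + z * mu^2 ∧ Even x ∧ Odd (y + z) := by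
    intro n hn
    induction n, hn using Nat.le_induction with
    | base => exact ⟨0, 1, 0, by push_cast; ring, Even.zero, ⟨0, by ring⟩⟩
    | succ n hn ih =>
      obtain ⟨x, y, z, hrep, hx, hyz⟩ := ih
      refine ⟨2*z, x+z, y, ?_, ⟨z, by ring⟩, ?_⟩
      · rw [pow_succ, hrep]; push_cast; linear_combination (z : ℂ) * hmu
      · obtain ⟨u, hu⟩ := hx
        obtain ⟨v, hv⟩ := hyz
        exact ⟨u + v, by omega⟩
  intro n hn himn
  obtain ⟨x, y, z, hrep, hx, hyz⟩ := key n hn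
  -- Imaginary part of x + yμ + zμ² is b(y + 2az).
  have himval : (mu ^ n).im = b * (y + 2*a*z) := by
    rw [hrep]
    simp only [Complex.add_im, Complex.mul_im, Complex.intCast_re, Complex.intCast_im,
      pow_two, Complex.mul_re]
    ring
  rw [himval] at himn
  have hlin : (y : ℝ) + 2*a*z = 0 := by
    rcases mul_eq_zero.mp himn with h1 | h1
    · exact absurd h1 hbne
    · exact h1
  by_cases hz : z = 0
  · -- then y = 0, contradicting y + z odd
    subst hz
    have hy : (y : ℝ) = 0 := by simpa using hlin
    have hy0 : y = 0 := by exact_mod_cast hy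
    subst hy0
    simp [Int.odd_iff] at hyz
  · -- then 2a = -y/z is rational, contradicting no_rat_root_aux_stmt7
    have hzr : (z : ℝ) ≠ 0 := by exact_mod_cast hz
    set q : ℚ := -(y : ℚ) / z with hqdef
    have hqr : (q : ℝ) = 2 * a := by
      rw [hqdef]
      push_cast
      field_simp
      linarith [hlin]
    have hq3 : q^3 - q + 2 = 0 := by
      have : (q : ℝ)^3 - q + 2 = 0 := by
        rw [hqr]; linarith [hcubic]
      exact_mod_cast this
    exact no_rat_root_aux_stmt7 q hq3
end

section
/- The set { μⁿ/|μ|ⁿ : n ∈ ℕ } is dense in the unit circle { z ∈ ℂ : |z| = 1 }; equivalently, the set of arguments { arg(μⁿ) mod 2π : n ≥ 1 } is dense in [0, 2π]. -/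
/-!
Write `a = Re μ`. Comparing real and imaginary parts of `μ³ = μ + 2` gives
`(Im μ)² = 3a² - 1` and `4a³ - a + 1 = 0`, and then `ζ = μ / μ̄` satisfies `ζ + ζ⁻¹ = -a - 1`.
If `μ / |μ|` had finite order, so would `ζ = (μ / |μ|)²`, making `ζ + ζ⁻¹`, hence `a`, an
algebraic integer. But `-2a` is a root of the monic `X³ - X - 2`, which has no root mod 3 and
so no rational root; thus `X³ - X/4 + 1/4` is irreducible over `ℚ`, it is the minimal
polynomial of `a`, and its coefficients are not integers. A point of infinite order on the
circle has dense powers.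
-/

open Polynomial ComplexConjugate

theorem Rat.pow_three_sub_self_sub_two_ne_zero (q : ℚ) : q ^ 3 - q - 2 ≠ 0 := by
  intro hq
  have hint : IsIntegral ℤ q := ⟨X ^ 3 - X - 2, by monicity!, by simpa using hq⟩
  obtain ⟨k, rfl⟩ := IsIntegrallyClosed.isIntegral_iff.mp hint
  have hk : k ^ 3 - k - 2 = 0 := by
    rw [← Int.cast_inj (α := ℚ)]
    push_cast
    exact hq
  have hk3 : (k : ZMod 3) ^ 3 - k - 2 = 0 := by
    exact_mod_cast congrArg (Int.cast : ℤ → ZMod 3) hk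
  generalize (k : ZMod 3) = x at hk3
  revert x
  decide

theorem minpoly_rat_eq_of_four_mul_pow_three_sub_add_one {K : Type*} [Field K] [CharZero K]
    {a : K} (ha : 4 * a ^ 3 - a + 1 = 0) :
    minpoly ℚ a = X ^ 3 - C (1 / 4) * X + C (1 / 4) := by
  have hmon : (X ^ 3 - C (1 / 4 : ℚ) * X + C (1 / 4)).Monic := by monicity!
  have hdeg : (X ^ 3 - C (1 / 4 : ℚ) * X + C (1 / 4)).natDegree = 3 := by compute_degree!
  refine (minpoly.eq_of_irreducible_of_monic ?_ ?_ hmon).symm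
  · rw [hmon.irreducible_iff_roots_eq_zero_of_degree_le_three (by omega) (by omega)]
    refine Multiset.eq_zero_of_forall_notMem fun q hq => ?_
    simp only [mem_roots hmon.ne_zero, IsRoot, eval_add, eval_sub, eval_pow, eval_mul, eval_C,
      eval_X] at hq
    exact Rat.pow_three_sub_self_sub_two_ne_zero (-2 * q) (by linear_combination -8 * hq)
  · simp only [map_add, map_sub, map_pow, map_mul, aeval_X, aeval_C, one_div, map_inv₀,
      eq_ratCast, Rat.cast_ofNat]
    linear_combination ha / 4

theorem not_isIntegral_of_four_mul_pow_three_sub_add_one {K : Type*} [Field K] [CharZero K]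
    {a : K} (ha : 4 * a ^ 3 - a + 1 = 0) : ¬ IsIntegral ℤ a := by
  intro hint
  have h := congrArg (coeff · 0) (minpoly.isIntegrallyClosed_eq_field_fractions' ℚ hint)
  have hcoeff : ((minpoly ℤ a).coeff 0 : ℚ) = 1 / 4 := by
    simpa [minpoly_rat_eq_of_four_mul_pow_three_sub_add_one ha] using h.symm
  have : 4 * (minpoly ℤ a).coeff 0 = 1 := by
    exact_mod_cast (by rw [hcoeff]; norm_num : (4 : ℚ) * ((minpoly ℤ a).coeff 0 : ℚ) = 1)
  omega

theorem IsOfFinOrder.isIntegral {R A : Type*} [CommRing R] [Ring A] [Algebra R A] {x : A}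
    (hx : IsOfFinOrder x) : IsIntegral R x := by
  obtain ⟨n, hn, hxn⟩ := isOfFinOrder_iff_pow_eq_one.mp hx
  exact IsIntegral.of_pow hn (hxn ▸ isIntegral_one)

theorem Complex.div_conj_eq_div_norm_sq (z : ℂ) : z / conj z = (z / ‖z‖) ^ 2 := by
  rcases eq_or_ne z 0 with rfl | hz
  · simp
  have hn : (‖z‖ : ℂ) ≠ 0 := by simpa using hz
  have hc : conj z ≠ 0 := by simpa using hz
  rw [div_pow, div_eq_div_iff hc (pow_ne_zero 2 hn), ← Complex.mul_conj']
  ring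

section CubicRoot

variable {μ : ℂ} (hμ : μ ^ 3 - μ - 2 = 0) (him : μ.im ≠ 0)
include hμ him

theorem im_sq_eq_of_cubic : μ.im ^ 2 = 3 * μ.re ^ 2 - 1 := by
  have h := congrArg Complex.im hμ
  simp only [pow_succ, pow_zero, one_mul, Complex.sub_im, Complex.mul_im, Complex.mul_re,
    Complex.im_ofNat, sub_zero, Complex.zero_im] at h
  have : μ.im * (3 * μ.re ^ 2 - μ.im ^ 2 - 1) = 0 := by linear_combination h
  linarith [(mul_eq_zero.mp this).resolve_left him]

theorem four_mul_re_pow_three_sub_re_add_one : 4 * μ.re ^ 3 - μ.re + 1 = 0 := by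
  have h := congrArg Complex.re hμ
  simp only [pow_succ, pow_zero, one_mul, Complex.sub_re, Complex.mul_re, Complex.mul_im,
    Complex.re_ofNat, Complex.zero_re] at h
  linear_combination (-1 / 2) * h + (-3 / 2) * μ.re * im_sq_eq_of_cubic hμ him

theorem div_conj_add_conj_div : μ / conj μ + conj μ / μ = -μ.re - 1 := by
  have hμ0 : μ ≠ 0 := fun h => him (by simp [h])
  have hc : conj μ ≠ 0 := by simpa using hμ0
  have ha : 4 * (μ.re : ℂ) ^ 3 - μ.re + 1 = 0 := by
    exact_mod_cast four_mul_re_pow_three_sub_re_add_one hμ him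
  have hb : (μ.im : ℂ) ^ 2 = 3 * μ.re ^ 2 - 1 := by exact_mod_cast im_sq_eq_of_cubic hμ him
  have hsum : μ + conj μ = 2 * μ.re := by rw [Complex.add_conj]; push_cast; ring
  have hprod : μ * conj μ = 4 * μ.re ^ 2 - 1 := by
    rw [Complex.mul_conj, Complex.normSq_apply]
    push_cast
    linear_combination hb
  rw [div_add_div _ _ hc hμ0, div_eq_iff (mul_ne_zero hc hμ0)]
  linear_combination (μ + conj μ + 2 * μ.re) * hsum + (μ.re - 1) * hprod + ha

theorem not_isOfFinOrder_div_norm : ¬ IsOfFinOrder (μ / ‖μ‖) := by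
  intro hfin
  have hζ : IsOfFinOrder (μ / conj μ) := by
    rw [Complex.div_conj_eq_div_norm_sq]
    exact hfin.pow
  have hζ' : IsOfFinOrder (conj μ / μ) := by
    simpa using (starRingEnd ℂ : ℂ →* ℂ).isOfFinOrder hζ
  refine not_isIntegral_of_four_mul_pow_three_sub_add_one (a := (μ.re : ℂ))
    (by exact_mod_cast four_mul_re_pow_three_sub_re_add_one hμ him) ?_
  rw [show (μ.re : ℂ) = -(μ / conj μ + conj μ / μ) - 1 by rw [div_conj_add_conj_div hμ him]; ring]
  exact ((hζ.isIntegral.add hζ'.isIntegral).neg).sub isIntegral_one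

end CubicRoot

theorem Circle.denseRange_pow {u : Circle} (hu : ¬ IsOfFinOrder u) :
    DenseRange (u ^ · : ℕ → Circle) := by
  have : Fact ((0 : ℝ) < 1) := ⟨one_pos⟩
  let e := AddCircle.homeomorphCircle (one_ne_zero : (1 : ℝ) ≠ 0)
  obtain ⟨a, rfl⟩ := e.surjective u
  have ha : addOrderOf a = 0 := by
    refine addOrderOf_eq_zero_iff'.2 fun n hn h => hu (isOfFinOrder_iff_pow_eq_one.2 ⟨n, hn, ?_⟩)
    rw [AddCircle.homeomorphCircle_apply, ← AddCircle.toCircle_nsmul, h, AddCircle.toCircle_zero]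
  rw [← denseRange_zpow_iff_pow]
  convert e.surjective.denseRange.comp (AddCircle.denseRange_zsmul_iff.2 ha) e.continuous using 1
  ext n : 1
  simp [e, AddCircle.homeomorphCircle_apply, AddCircle.toCircle_zsmul]

theorem Circle.sphere_subset_closure_range_pow {u : Circle} (hu : ¬ IsOfFinOrder u) :
    Metric.sphere (0 : ℂ) 1 ⊆ closure (Set.range fun n : ℕ => (u : ℂ) ^ n) := fun w hw =>
  map_mem_closure (f := ((↑) : Circle → ℂ)) continuous_subtype_val
    (Circle.denseRange_pow hu ⟨w, hw⟩) (fun _ ⟨n, hn⟩ => ⟨n, hn ▸ rfl⟩)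

/-- The set `{ μⁿ/|μ|ⁿ : n ∈ ℕ }` is dense in the unit circle of `ℂ`, where `μ` is the
non-real root of `t³ − t − 2` with `Im μ > 0`. -/
theorem stmt_8 (mu : ℂ) (hmu : mu ^ 3 - mu - 2 = 0) (hmuim : 0 < mu.im) :
    Metric.sphere (0 : ℂ) 1 ⊆
      closure {w : ℂ | ∃ n : ℕ, w = mu ^ n / ((‖mu‖ : ℂ)) ^ n} := by
  have hmu0 : mu ≠ 0 := by rintro rfl; norm_num at hmu
  let u : Circle := ⟨mu / ‖mu‖, mem_sphere_zero_iff_norm.2 (by simp [hmu0])⟩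
  have hu : ¬ IsOfFinOrder u := fun h =>
    not_isOfFinOrder_div_norm hmu hmuim.ne' (Circle.coeHom.isOfFinOrder h)
  convert Circle.sphere_subset_closure_range_pow hu using 2
  show _ = Set.range fun n : ℕ => (mu / ‖mu‖ : ℂ) ^ n
  ext w
  simp only [Set.mem_ofPred_eq, Set.mem_range, div_pow, eq_comm]
end

section
/- For every integer n ≥ 0 and every function ξ : ℕ → {0,1}: (i) 1.3·λ^{n−5} < λⁿ − Σ_{i=0}^{n−3} ξ(i)·λⁱ ≤ λⁿ (the sum being empty when n < 3); and (ii) if n ≥ 2, then 1.1·λ^{n−4} < λⁿ − λ^{n−2} − Σ_{i=0}^{n−5} ξ(i)·λⁱ ≤ 2·λ^{n−3} (the sum being empty when n < 5). -/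
/-- Bounds on the weights of quasi-standard monomials: for every `n ≥ 0` and every
`ξ : ℕ → {0,1}`,
(i) `1.3 λ^{n−5} < λⁿ − Σ_{i=0}^{n−3} ξ(i) λⁱ ≤ λⁿ`, and
(ii) if `n ≥ 2` then
`1.1 λ^{n−4} < λⁿ − λ^{n−2} − Σ_{i=0}^{n−5} ξ(i) λⁱ ≤ 2 λ^{n−3}`,
where `λ` is the real root of `t³ − t − 2` and the exponents `n−5`, `n−4`, `n−3` are
taken in `ℤ`. -/
theorem stmt_10 (lam : ℝ) (hlam : lam ^ 3 - lam - 2 = 0)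
    (n : ℕ) (ξ : ℕ → ℝ) (hξ : ∀ i, ξ i = 0 ∨ ξ i = 1) :
    ((1.3 : ℝ) * lam ^ ((n : ℤ) - 5)
        < lam ^ n - ∑ i ∈ Finset.range (n - 2), ξ i * lam ^ i ∧
      lam ^ n - ∑ i ∈ Finset.range (n - 2), ξ i * lam ^ i ≤ lam ^ n) ∧
    (2 ≤ n →
      (1.1 : ℝ) * lam ^ ((n : ℤ) - 4)
          < lam ^ n - lam ^ (n - 2) - ∑ i ∈ Finset.range (n - 4), ξ i * lam ^ i ∧
        lam ^ n - lam ^ (n - 2) - ∑ i ∈ Finset.range (n - 4), ξ i * lam ^ i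
          ≤ 2 * lam ^ ((n : ℤ) - 3)) := by
  have h1 : (1.5213:ℝ) < lam := by
    nlinarith [sq_nonneg (lam + 0.7607), sq_nonneg (lam - 1.5213), sq_nonneg lam]
  have h2 : lam < 1.5214 := by
    nlinarith [sq_nonneg (lam + 0.7607), sq_nonneg (lam - 1.5214), sq_nonneg lam]
  have hpos : (0:ℝ) < lam := by linarith
  have hne0 : lam ≠ 0 := ne_of_gt hpos
  set P := lam ^ ((n:ℤ) - 5) with hPdef
  have hP : 0 < P := zpow_pos hpos _
  have hz : ∀ k : ℕ, lam ^ ((n:ℤ) - 5 + k) = P * lam ^ k := by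
    intro k; rw [zpow_add₀ hne0, zpow_natCast]
  have hPn : lam ^ n = P * lam ^ 5 := by
    calc lam ^ n = lam ^ ((n:ℤ) - 5 + (5:ℕ)) := by
          rw [← zpow_natCast lam n]; congr 1; push_cast; ring
      _ = P * lam ^ (5:ℕ) := hz 5
  have hP4 : lam ^ ((n:ℤ) - 4) = P * lam := by
    calc lam ^ ((n:ℤ) - 4) = lam ^ ((n:ℤ) - 5 + (1:ℕ)) := by congr 1; push_cast; ring
      _ = P * lam ^ (1:ℕ) := hz 1
      _ = P * lam := by ring
  have hP3 : lam ^ ((n:ℤ) - 3) = P * lam ^ 2 := by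
    calc lam ^ ((n:ℤ) - 3) = lam ^ ((n:ℤ) - 5 + (2:ℕ)) := by congr 1; push_cast; ring
      _ = P * lam ^ (2:ℕ) := hz 2
  have hnat : ∀ m : ℕ, m ≤ n → lam ^ (n - m) = lam ^ ((n:ℤ) - m) := by
    intro m hm; rw [← zpow_natCast, Nat.cast_sub hm]
  -- sum bounds
  have sumb : ∀ m : ℕ, 0 ≤ (∑ i ∈ Finset.range m, ξ i * lam ^ i) ∧
      (∑ i ∈ Finset.range m, ξ i * lam ^ i) * (lam - 1) ≤ lam ^ m - 1 := by
    intro m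
    have hle : ∀ i ∈ Finset.range m, ξ i * lam ^ i ≤ 1 * lam ^ i := by
      intro i _
      rcases hξ i with h | h <;> rw [h] <;> nlinarith [pow_pos hpos i]
    refine ⟨Finset.sum_nonneg fun i _ => ?_, ?_⟩
    · rcases hξ i with h | h <;> rw [h] <;> positivity
    · calc (∑ i ∈ Finset.range m, ξ i * lam ^ i) * (lam - 1)
          ≤ (∑ i ∈ Finset.range m, 1 * lam ^ i) * (lam - 1) := by
            apply mul_le_mul_of_nonneg_right (Finset.sum_le_sum hle); linarith
        _ = lam ^ m - 1 := by simpa using geom_sum_mul lam m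
  have h5 : lam ^ 5 = 2 * lam ^ 2 + lam + 2 := by linear_combination (lam^2 + 1) * hlam
  -- core inequalities
  have lemA : ∀ p S : ℝ, 0 < p → 0 ≤ S → S * (lam - 1) ≤ p * lam ^ 3 - 1 →
      1.3 * p < p * lam ^ 5 - S := by
    intro p S hp hS key
    have hq : (0:ℝ) < -lam^2 + 0.7*lam + 1.3 := by nlinarith
    nlinarith [mul_pos hp hq, key, hS, mul_nonneg hS (by linarith : (0:ℝ) ≤ lam - 1)]
  have lemB : ∀ p S : ℝ, 0 < p → 0 ≤ S → S * (lam - 1) ≤ p * lam - 1 →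
      1.1 * (p * lam) < p * lam ^ 5 - p * lam ^ 3 - S := by
    intro p S hp hS key
    have hq : (0:ℝ) < -3.1*lam^2 + 2.1*lam + 4 := by nlinarith
    nlinarith [mul_pos hp hq, key, hS]
  constructor
  · constructor
    · -- part (i) lower
      rw [hPn]
      by_cases hn : 2 ≤ n
      · have hkey : (∑ i ∈ Finset.range (n-2), ξ i * lam ^ i) * (lam - 1) ≤ P * lam ^ 3 - 1 := by
          have := (sumb (n-2)).2
          rwa [hnat 2 hn, show ((n:ℤ) - ((2:ℕ):ℤ)) = (n:ℤ) - 5 + ((3:ℕ):ℤ) by push_cast; ring, hz 3] at this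
        exact lemA P _ hP (sumb (n-2)).1 hkey
      · have hn2 : n - 2 = 0 := by omega
        rw [hn2]
        simp only [Finset.range_zero, Finset.sum_empty]
        nlinarith [mul_pos hP (show (0:ℝ) < lam ^ 5 - 1.3 by nlinarith)]
    · have := (sumb (n-2)).1; linarith
  · intro hn2
    have hn2' : lam ^ (n - 2) = P * lam ^ 3 := by
      rw [hnat 2 hn2, show ((n:ℤ) - ((2:ℕ):ℤ)) = (n:ℤ) - 5 + ((3:ℕ):ℤ) by push_cast; ring, hz 3]
    have hS2 := (sumb (n-4)).1
    constructor
    · rw [hPn, hn2', hP4]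
      by_cases hn : 4 ≤ n
      · have hkey : (∑ i ∈ Finset.range (n-4), ξ i * lam ^ i) * (lam - 1) ≤ P * lam - 1 := by
          have := (sumb (n-4)).2
          rwa [hnat 4 hn, show ((n:ℤ) - ((4:ℕ):ℤ)) = (n:ℤ) - 5 + ((1:ℕ):ℤ) by push_cast; ring, hz 1,
            pow_one] at this
        exact lemB P _ hP hS2 hkey
      · have hn4 : n - 4 = 0 := by omega
        rw [hn4]
        simp only [Finset.range_zero, Finset.sum_empty]
        have e : P * lam ^ 5 - P * lam ^ 3 = 2 * (P * lam ^ 2) := by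
          linear_combination (P * lam ^ 2) * hlam
        nlinarith [mul_pos hP (show (0:ℝ) < 2 * lam ^ 2 - 1.1 * lam by nlinarith)]
    · rw [hPn, hn2', hP3]
      have e : P * lam ^ 5 - P * lam ^ 3 = 2 * (P * lam ^ 2) := by
        linear_combination (P * lam ^ 2) * hlam
      linarith
end

section
/- For all integers i ≥ 0 and k ≥ 0, as equalities of K-linear endomorphisms of the Grassmann algebra Λ: (i) v_i ∘ v_{i+3k} + v_{i+3k} ∘ v_i = 2·(∏_{l=0}^{k−1} x_{i+3l} x_{i+3l+1}) ∘ x_{i+3k+1} ∘ v_{i+3k+3}; (ii) v_i ∘ v_{i+3k+1} + v_{i+3k+1} ∘ v_i = −(∏_{l=0}^{k−1} x_{i+3l} x_{i+3l+1}) ∘ x_{i+3k} ∘ v_{i+3k+3}; (iii) v_i ∘ v_{i+3k+2} + v_{i+3k+2} ∘ v_i = −(∏_{l=0}^{k} x_{i+3l} x_{i+3l+1}) ∘ x_{i+3k+2} ∘ v_{i+3k+5}. -/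
/-- The Grassmann algebra `Λ(x_i ∣ i ≥ 0)`: the exterior algebra over `K` of the free
`K`-module with basis indexed by `ℕ`. -/
noncomputable abbrev GrassmannAlgebra (K : Type*) [Field K] :=
  ExteriorAlgebra K (ℕ →₀ K)

/-- The `i`-th Grassmann generator `x_i ∈ Λ`. -/
noncomputable def grassGen (K : Type*) [Field K] (i : ℕ) : GrassmannAlgebra K :=
  ExteriorAlgebra.ι K (Finsupp.single i 1)

/-- The operator of left multiplication by `x_i` on `Λ`. -/
noncomputable def grassMul (K : Type*) [Field K] (i : ℕ) :
    Module.End K (GrassmannAlgebra K) :=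
  LinearMap.mulLeft K (grassGen K i)

/-!
`Λ` is the union of the subalgebras `Λ_{<n}` generated by the `x_j` with `j < n`, and `v_n`
vanishes on `Λ_{<n}`. Hence an operator `D_0` is zero as soon as `D_t = g_t D_{t+1}` for all `t`
and every element is killed by some `D_t`. Feeding the recursion `v_j = ∂_j + x_j x_{j+1} v_{j+3}`
into this descent shows that `x_l` and `∂_l` anticommute with `v_j` for `l < j`, whence also
`[x_j, v_j] = 1`. The same recursion for `v_i` gives `[v_i, v_j] = x_i x_{i+1} [v_{i+3}, v_j]` for
`j ≥ i + 3`, so induction on `k` reduces everything to `j ∈ {i, i + 1, i + 2}`. The first two are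
direct computations; the last is one more descent.
-/

section RingIdentities

variable {R : Type*} [Ring R]

theorem commute_mul_of_anticomm {s b c : R} (hb : s * b + b * s = 0) (hc : s * c + c * s = 0) :
    s * (b * c) = b * c * s := by
  have hb' : s * b = -(b * s) := eq_neg_of_add_eq_zero_left hb
  have hc' : s * c = -(c * s) := eq_neg_of_add_eq_zero_left hc
  rw [← mul_assoc, hb', neg_mul, mul_assoc, hc', mul_neg, neg_neg, mul_assoc]

theorem anticomm_add_mul (s p a w e : R) (h : s * a = a * s + e) :
    s * (p + a * w) + (p + a * w) * s = (s * p + p * s) + e * w + a * (s * w + w * s) := by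
  have hsaw : s * (a * w) = a * (s * w) + e * w := by rw [← mul_assoc, h, add_mul, mul_assoc]
  rw [mul_add, add_mul, hsaw, mul_add, mul_assoc]
  abel

theorem anticomm_mul_eq {s a w e : R} (h : s * a = a * s + e) (hw : s * w + w * s = 0) :
    s * (a * w) + a * w * s = e * w := by
  simpa [hw] using anticomm_add_mul s 0 a w e h

theorem mul_mul_mul_add_eq {a b V W f : R} (h : V * b + f = b * V) :
    a * V * (b * W) + a * f * W = a * b * (V * W) :=
  calc a * V * (b * W) + a * f * W = a * (V * b + f) * W := by noncomm_ring
    _ = a * b * (V * W) := by rw [h]; noncomm_ring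

theorem anticomm_add_mul_add (p q a b V W : R) :
    (p + a * V) * (q + b * W) + (q + b * W) * (p + a * V)
      = (p * q + q * p) + (p * (b * W) + b * W * p) + (q * (a * V) + a * V * q)
        + (a * V * (b * W) + b * W * (a * V)) := by
  noncomm_ring

end RingIdentities

theorem List.prod_map_range_succ_step {M : Type*} [Monoid M] (f : ℕ → M) (c i n : ℕ) :
    ((List.range (n + 1)).map fun l => f (i + c * l)).prod
      = f i * ((List.range n).map fun l => f (i + c + c * l)).prod := by
  simp only [List.prod_range_succ', mul_zero, add_zero, Nat.succ_eq_add_one, mul_add, mul_one,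
    add_assoc, add_comm c]

theorem Module.End.eq_zero_of_eq_mul_succ {R M : Type*} [Semiring R] [AddCommMonoid M]
    [Module R M] (D g : ℕ → Module.End R M) (hstep : ∀ t, D t = g t * D (t + 1))
    (hvan : ∀ w, ∃ t, D t w = 0) : D 0 = 0 := by
  ext1 w
  obtain ⟨t, ht⟩ := hvan w
  have hdown : ∀ s r, D (s + r) w = 0 → D s w = 0 := by
    intro s r
    induction r generalizing s with
    | zero => exact id
    | succ r ih =>
      intro h
      rw [hstep s, Module.End.mul_apply, ih (s + 1) (by rwa [add_right_comm]), map_zero]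
  simpa using hdown 0 t (by simpa using ht)

section Grassmann

variable {K : Type*} [Field K]

local notation "X" => grassMul K

theorem grassMul_eq_lmul (i : ℕ) : X i = Algebra.lmul K (GrassmannAlgebra K) (grassGen K i) :=
  rfl

theorem grassMul_anticomm (i j : ℕ) : X i * X j + X j * X i = 0 := by
  rw [grassMul_eq_lmul, grassMul_eq_lmul, ← map_mul, ← map_mul, ← map_add, grassGen, grassGen,
    ExteriorAlgebra.ι_add_mul_swap, map_zero]

theorem grassMul_mul_self (i : ℕ) : X i * X i = 0 := by
  rw [grassMul_eq_lmul, ← map_mul, grassGen, ExteriorAlgebra.ι_sq_zero, map_zero]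

theorem grassMul_commute_pair (l m m' : ℕ) : X l * (X m * X m') = X m * X m' * X l :=
  commute_mul_of_anticomm (grassMul_anticomm l m) (grassMul_anticomm l m')

theorem grassMul_pair_commute_pair (p q r s : ℕ) :
    X p * X q * (X r * X s) = X r * X s * (X p * X q) := by
  rw [mul_assoc, grassMul_commute_pair q, ← mul_assoc, grassMul_commute_pair p, mul_assoc]

theorem grassMul_pair_mul_pair_eq_zero (p q r s : ℕ) (h : p = r ∨ p = s ∨ q = r ∨ q = s) :
    X p * X q * (X r * X s) = 0 := by
  have hpr : ∀ p q s, X p * X q * (X p * X s) = 0 := fun p q s => by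
    rw [mul_assoc, grassMul_commute_pair q, ← mul_assoc, ← mul_assoc, grassMul_mul_self, zero_mul,
      zero_mul]
  rcases h with rfl | rfl | rfl | rfl
  · exact hpr p q s
  · rw [mul_assoc, grassMul_commute_pair q, ← mul_assoc, grassMul_commute_pair p, mul_assoc (X r),
      grassMul_mul_self, mul_zero, zero_mul]
  · rw [mul_assoc, ← mul_assoc (X q), grassMul_mul_self, zero_mul, mul_zero]
  · rw [mul_assoc, grassMul_commute_pair, mul_assoc, grassMul_mul_self, mul_zero, mul_zero]

end Grassmann

noncomputable def grassBelow (K : Type*) [Field K] (n : ℕ) : Subalgebra K (GrassmannAlgebra K) :=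
  Algebra.adjoin K (grassGen K '' {j : ℕ | j < n})

section Filtration

variable {K : Type*} [Field K]

theorem grassBelow_mono {m n : ℕ} (h : m ≤ n) : grassBelow K m ≤ grassBelow K n :=
  Algebra.adjoin_mono (Set.image_mono fun _ (hj : _ < m) => lt_of_lt_of_le hj h)

theorem grassGen_mem_grassBelow {j n : ℕ} (h : j < n) : grassGen K j ∈ grassBelow K n :=
  Algebra.subset_adjoin ⟨j, h, rfl⟩

theorem exists_mem_grassBelow (w : GrassmannAlgebra K) : ∃ n, w ∈ grassBelow K n := by
  have hsup : ∀ {u w : GrassmannAlgebra K}, (∃ n, u ∈ grassBelow K n) → (∃ n, w ∈ grassBelow K n) →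
      ∃ n, u ∈ grassBelow K n ∧ w ∈ grassBelow K n := fun ⟨m, hu⟩ ⟨n, hw⟩ =>
    ⟨max m n, grassBelow_mono (le_max_left m n) hu, grassBelow_mono (le_max_right m n) hw⟩
  induction w using ExteriorAlgebra.induction with
  | algebraMap r => exact ⟨0, Subalgebra.algebraMap_mem _ r⟩
  | ι m =>
    induction m using Finsupp.induction_linear with
    | zero => exact ⟨0, by simp⟩
    | add f g hf hg =>
      obtain ⟨n, hf, hg⟩ := hsup hf hg
      exact ⟨n, by simpa only [map_add] using add_mem hf hg⟩
    | single j b =>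
      refine ⟨j + 1, ?_⟩
      rw [← mul_one b, ← smul_eq_mul, ← Finsupp.smul_single, map_smul]
      exact Subalgebra.smul_mem _ (grassGen_mem_grassBelow (Nat.lt_succ_self j)) b
  | mul u w hu hw =>
    obtain ⟨n, hu, hw⟩ := hsup hu hw
    exact ⟨n, mul_mem hu hw⟩
  | add u w hu hw =>
    obtain ⟨n, hu, hw⟩ := hsup hu hw
    exact ⟨n, add_mem hu hw⟩

theorem grassBelow_induction {n : ℕ} {P : GrassmannAlgebra K → Prop} (one : P 1)
    (gen_mul : ∀ j < n, ∀ w ∈ grassBelow K n, P w → P (grassGen K j * w))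
    (add : ∀ u w, P u → P w → P (u + w)) (smul : ∀ (c : K) w, P w → P (c • w))
    {w : GrassmannAlgebra K} (hw : w ∈ grassBelow K n) : P w := by
  rw [← Subalgebra.mem_toSubmodule, grassBelow, Algebra.adjoin_eq_span] at hw
  induction hw using Submodule.span_induction with
  | mem u hu =>
    induction hu using Submonoid.closure_induction_left with
    | one => exact one
    | mul_left x hx u hu ih =>
      obtain ⟨j, hj, rfl⟩ := hx
      refine gen_mul j hj u ?_ ih
      exact Submonoid.closure_le.mpr Algebra.subset_adjoin hu
  | zero => simpa using smul 0 1 one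
  | add u w _ _ hu hw => exact add u w hu hw
  | smul c u _ hu => exact smul c u hu

end Filtration

section Pivot

variable {K : Type*} [Field K] (d v : ℕ → Module.End K (GrassmannAlgebra K))
  (hd : ∀ i j : ℕ, d i * grassMul K j + grassMul K j * d i = if i = j then 1 else 0)
  (hd1 : ∀ i : ℕ, d i (1 : GrassmannAlgebra K) = 0)
  (hdd : ∀ i j : ℕ, d i * d j + d j * d i = 0)
  (hv : ∀ i : ℕ, v i = d i + grassMul K i * grassMul K (i + 1) * v (i + 3))
  (hv0 : ∀ i : ℕ, ∀ w ∈ Algebra.adjoin K (grassGen K '' {j : ℕ | j < i}), v i w = 0)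

local notation "X" => grassMul K

include hd in
theorem d_mul_grassMul (l m : ℕ) : d l * X m = (if l = m then 1 else 0) - X m * d l :=
  eq_sub_of_add_eq (hd l m)

include hd in
theorem d_mul_grassMul_pair (l m m' : ℕ) :
    d l * (X m * X m')
      = X m * X m' * d l + ((if l = m then X m' else 0) - if l = m' then X m else 0) := by
  rw [← mul_assoc, d_mul_grassMul d hd, sub_mul, mul_assoc, d_mul_grassMul d hd, mul_sub,
    ← mul_assoc]
  split_ifs <;> simp only [one_mul, zero_mul, mul_one, mul_zero] <;> abel

include hd in
theorem d_commute_grassMul_pair {l m m' : ℕ} (hm : l ≠ m) (hm' : l ≠ m') :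
    d l * (X m * X m') = X m * X m' * d l := by
  simp [d_mul_grassMul_pair d hd, hm, hm']

include hd hd1 in
theorem d_mem_grassBelow (l : ℕ) {n : ℕ} {w : GrassmannAlgebra K} (hw : w ∈ grassBelow K n) :
    d l w ∈ grassBelow K n := by
  refine grassBelow_induction (P := fun w => d l w ∈ grassBelow K n) (by simp [hd1])
    (fun j hj u hu ih => ?_) (fun u w hu hw => by simpa using add_mem hu hw)
    (fun c w hw => by simpa using Subalgebra.smul_mem _ hw c) hw
  have h := LinearMap.congr_fun (d_mul_grassMul d hd l j) u
  simp only [Module.End.mul_apply, LinearMap.sub_apply, grassMul, LinearMap.mulLeft_apply] at h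
  rw [h]
  refine sub_mem ?_ (mul_mem (grassGen_mem_grassBelow hj) ih)
  split_ifs <;> simp [hu]

include hv hv0 in
theorem anticomm_pivot_of_lt (s : Module.End K (GrassmannAlgebra K)) {l : ℕ}
    (hsd : ∀ m, l < m → s * d m + d m * s = 0)
    (hsx : ∀ m, l < m → s * (X m * X (m + 1)) = X m * X (m + 1) * s)
    (hsmem : ∀ n, l < n → ∀ w ∈ grassBelow K n, s w ∈ grassBelow K n)
    {j : ℕ} (hlj : l < j) : s * v j + v j * s = 0 := by
  have hdesc := Module.End.eq_zero_of_eq_mul_succ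
    (fun t => s * v (j + 3 * t) + v (j + 3 * t) * s) (fun t => X (j + 3 * t) * X (j + 3 * t + 1))
    (fun t => ?step) (fun w => ?vanish)
  · simpa using hdesc
  case step =>
    have hsa := hsx (j + 3 * t) (by omega)
    rw [hv (j + 3 * t), anticomm_add_mul s _ _ _ 0 (by rw [hsa, add_zero]), hsd _ (by omega),
      zero_mul, add_zero, zero_add, show j + 3 * (t + 1) = j + 3 * t + 3 by ring]
  case vanish =>
    obtain ⟨n, hw⟩ := exists_mem_grassBelow w
    have hw' : w ∈ grassBelow K (j + 3 * n) := grassBelow_mono (by omega) hw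
    refine ⟨n, ?_⟩
    simp only [LinearMap.add_apply, Module.End.mul_apply, hv0 _ w hw',
      hv0 _ _ (hsmem _ (by omega) w hw'), map_zero, add_zero]

include hd hv hv0 in
theorem grassMul_anticomm_pivot {l j : ℕ} (h : l < j) : X l * v j + v j * X l = 0 := by
  refine anticomm_pivot_of_lt d v hv hv0 (X l) (fun m hm => ?_)
    (fun m _ => grassMul_commute_pair _ _ _)
    (fun n hn w hw => mul_mem (grassGen_mem_grassBelow hn) hw) h
  rw [add_comm, hd, if_neg (by omega)]

include hd hd1 hdd hv hv0 in
theorem d_anticomm_pivot {l j : ℕ} (h : l < j) : d l * v j + v j * d l = 0 :=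
  anticomm_pivot_of_lt d v hv hv0 (d l) (fun m _ => hdd l m)
    (fun m hm => d_commute_grassMul_pair d hd (by omega) (by omega))
    (fun _ _ _ hw => d_mem_grassBelow d hd hd1 l hw) h

include hd hv hv0 in
theorem grassMul_anticomm_pivot_self (j : ℕ) : X j * v j + v j * X j = 1 := by
  have hxa : X j * (X j * X (j + 1)) = X j * X (j + 1) * X j + 0 := by
    rw [grassMul_commute_pair, add_zero]
  rw [hv j, anticomm_add_mul _ _ _ _ 0 hxa, add_comm (X j * d j), hd, if_pos rfl, zero_mul,
    grassMul_anticomm_pivot d v hd hv hv0 (by omega), mul_zero, add_zero, add_zero]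

include hd hv hv0 in
theorem pivot_commute_grassMul_pair {p q j : ℕ} (hp : p < j) (hq : q < j) :
    v j * (X p * X q) = X p * X q * v j :=
  commute_mul_of_anticomm (by rw [add_comm]; exact grassMul_anticomm_pivot d v hd hv hv0 hp)
    (by rw [add_comm]; exact grassMul_anticomm_pivot d v hd hv hv0 hq)

include hd hv hv0 in
theorem pivot_mul_grassMul_pair_of_lt {p m : ℕ} (hp : p < m) :
    v m * (X p * X m) + X p = X p * X m * v m := by
  have hvp :=
    eq_neg_of_add_eq_zero_left ((add_comm _ _).trans (grassMul_anticomm_pivot d v hd hv hv0 hp))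
  have hvm := eq_sub_of_add_eq ((add_comm _ _).trans (grassMul_anticomm_pivot_self d v hd hv hv0 m))
  rw [← mul_assoc, hvp, neg_mul (α := Module.End K (GrassmannAlgebra K)), mul_assoc, hvm, mul_sub,
    mul_one, ← mul_assoc]
  abel

include hd hd1 hdd hv hv0 in
theorem pivot_anticomm_of_add_three_le {i j : ℕ} (hij : i + 3 ≤ j) :
    v i * v j + v j * v i = X i * X (i + 1) * (v (i + 3) * v j + v j * v (i + 3)) := by
  have hva : v j * (X i * X (i + 1)) = X i * X (i + 1) * v j + 0 := by
    rw [pivot_commute_grassMul_pair d v hd hv hv0 (by omega) (by omega), add_zero]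
  rw [add_comm, hv i, anticomm_add_mul _ _ _ _ 0 hva, add_comm (v j * d i),
    d_anticomm_pivot d v hd hd1 hdd hv hv0 (by omega), zero_mul, zero_add, zero_add,
    add_comm (v j * v (i + 3))]

include hd hd1 hdd hv hv0 in
theorem pivot_anticomm_self (i : ℕ) : v i * v i + v i * v i = 2 • (X (i + 1) * v (i + 3)) := by
  have hdv : d i * (X i * X (i + 1) * v (i + 3)) + X i * X (i + 1) * v (i + 3) * d i
      = X (i + 1) * v (i + 3) :=
    anticomm_mul_eq (by simpa using d_mul_grassMul_pair d hd i i (i + 1))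
      (d_anticomm_pivot d v hd hd1 hdd hv hv0 (by omega))
  have hsq := mul_mul_mul_add_eq (a := X i * X (i + 1)) (b := X i * X (i + 1))
    (V := v (i + 3)) (W := v (i + 3)) (f := 0)
    (by rw [add_zero, pivot_commute_grassMul_pair d v hd hv hv0 (by omega) (by omega)])
  simp only [grassMul_pair_mul_pair_eq_zero _ _ _ _ (Or.inl rfl), mul_zero, zero_mul,
    add_zero] at hsq
  rw [hv i, anticomm_add_mul_add, hdd, hdv, hsq, two_smul]
  simp

include hd hd1 hdd hv hv0 in
theorem pivot_anticomm_succ (i : ℕ) :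
    v i * v (i + 1) + v (i + 1) * v i = -(X i * v (i + 3)) := by
  have hdv : d i * (X (i + 1) * X (i + 2) * v (i + 4)) + X (i + 1) * X (i + 2) * v (i + 4) * d i
      = 0 := by
    simpa using anticomm_mul_eq (e := 0)
      (by rw [d_commute_grassMul_pair d hd (by omega) (by omega), add_zero])
      (d_anticomm_pivot d v hd hd1 hdd hv hv0 (show i < i + 4 by omega))
  have hdv' : d (i + 1) * (X i * X (i + 1) * v (i + 3)) + X i * X (i + 1) * v (i + 3) * d (i + 1)
      = -X i * v (i + 3) :=
    anticomm_mul_eq (by simpa using d_mul_grassMul_pair d hd (i + 1) i (i + 1))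
      (d_anticomm_pivot d v hd hd1 hdd hv hv0 (by omega))
  have hvv := mul_mul_mul_add_eq (a := X i * X (i + 1)) (b := X (i + 1) * X (i + 2))
    (V := v (i + 3)) (W := v (i + 4)) (f := 0)
    (by rw [add_zero, pivot_commute_grassMul_pair d v hd hv hv0 (show i + 1 < i + 3 by omega)
      (show i + 2 < i + 3 by omega)])
  have hvv' := mul_mul_mul_add_eq (a := X (i + 1) * X (i + 2)) (b := X i * X (i + 1))
    (V := v (i + 4)) (W := v (i + 3)) (f := 0)
    (by rw [add_zero, pivot_commute_grassMul_pair d v hd hv hv0 (show i < i + 4 by omega)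
      (show i + 1 < i + 4 by omega)])
  simp only [grassMul_pair_mul_pair_eq_zero i (i + 1) (i + 1) (i + 2) (by omega), mul_zero,
    zero_mul, add_zero] at hvv
  simp only [grassMul_pair_mul_pair_eq_zero (i + 1) (i + 2) i (i + 1) (by omega), mul_zero,
    zero_mul, add_zero] at hvv'
  rw [hv i, hv (i + 1), anticomm_add_mul_add, hdd, hdv, hdv', hvv, hvv']
  simpa only [add_zero, zero_add] using neg_mul (X i) (v (i + 3))

include hd hd1 hdd hv hv0 in
theorem pivot_anticomm_add_two_add (m : ℕ) :
    v m * v (m + 2) + v (m + 2) * v m + X m * X (m + 1) * (X (m + 2) * v (m + 5))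
      = X m * X (m + 1) * (X (m + 2) * X (m + 3))
        * (v (m + 3) * v (m + 5) + v (m + 5) * v (m + 3)) := by
  have hdv : d m * (X (m + 2) * X (m + 3) * v (m + 5)) + X (m + 2) * X (m + 3) * v (m + 5) * d m
      = 0 := by
    simpa using anticomm_mul_eq (e := 0)
      (by rw [d_commute_grassMul_pair d hd (by omega) (by omega), add_zero])
      (d_anticomm_pivot d v hd hd1 hdd hv hv0 (show m < m + 5 by omega))
  have hdv' : d (m + 2) * (X m * X (m + 1) * v (m + 3)) + X m * X (m + 1) * v (m + 3) * d (m + 2)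
      = 0 := by
    simpa using anticomm_mul_eq (e := 0)
      (by rw [d_commute_grassMul_pair d hd (by omega) (by omega), add_zero])
      (d_anticomm_pivot d v hd hd1 hdd hv hv0 (show m + 2 < m + 3 by omega))
  have hvv := mul_mul_mul_add_eq (a := X m * X (m + 1)) (W := v (m + 5))
    (pivot_mul_grassMul_pair_of_lt d v hd hv hv0 (show m + 2 < m + 3 by omega))
  have hvv' := mul_mul_mul_add_eq (a := X (m + 2) * X (m + 3)) (b := X m * X (m + 1))
    (V := v (m + 5)) (W := v (m + 3)) (f := 0)
    (by rw [add_zero, pivot_commute_grassMul_pair d v hd hv hv0 (show m < m + 5 by omega)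
      (show m + 1 < m + 5 by omega)])
  simp only [mul_zero, zero_mul, add_zero, grassMul_pair_commute_pair (m + 2)] at hvv'
  rw [hv m, hv (m + 2), anticomm_add_mul_add, hdd, hdv, hdv', zero_add, zero_add, zero_add,
    add_right_comm, ← mul_assoc (X m * X (m + 1)), hvv, hvv', mul_add]

include hd hd1 hdd hv hv0 in
theorem pivot_anticomm_add_two (i : ℕ) :
    v i * v (i + 2) + v (i + 2) * v i = -(X i * X (i + 1) * (X (i + 2) * v (i + 5))) := by
  have hdesc := Module.End.eq_zero_of_eq_mul_succ
    (fun t => v (i + 3 * t) * v (i + 3 * t + 2) + v (i + 3 * t + 2) * v (i + 3 * t)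
      + X (i + 3 * t) * X (i + 3 * t + 1) * (X (i + 3 * t + 2) * v (i + 3 * t + 5)))
    (fun t => X (i + 3 * t) * X (i + 3 * t + 1) * (X (i + 3 * t + 2) * X (i + 3 * t + 3)))
    (fun t => ?step) (fun w => ?vanish)
  · simpa using eq_neg_of_add_eq_zero_left hdesc
  case step =>
    rw [show i + 3 * (t + 1) = i + 3 * t + 3 by ring]
    generalize i + 3 * t = m
    -- the correction term dies because `x_{m+3}` occurs twice
    have hcorr : X m * X (m + 1) * (X (m + 2) * X (m + 3))
        * (X (m + 3) * X (m + 4) * (X (m + 5) * v (m + 8))) = 0 := by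
      rw [mul_assoc, ← mul_assoc (X (m + 2) * X (m + 3)), grassMul_pair_mul_pair_eq_zero _ _ _ _
        (by omega), zero_mul, mul_zero]
    simp only [Nat.add_assoc, Nat.reduceAdd]
    rw [pivot_anticomm_add_two_add d v hd hd1 hdd hv hv0, mul_add _ _ (X (m + 3) * _ * _), hcorr,
      add_zero]
  case vanish =>
    obtain ⟨n, hw⟩ := exists_mem_grassBelow w
    have hv' : ∀ j, n ≤ j → v j w = 0 := fun j hj => hv0 j w (grassBelow_mono hj hw)
    refine ⟨n, ?_⟩
    simp [hv' (i + 3 * n) (by omega), hv' (i + 3 * n + 2) (by omega),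
      hv' (i + 3 * n + 5) (by omega)]

end Pivot

/-- General multiplication rules for the pivot operators `v_i`, `i, k ≥ 0`:
`[v_i, v_{i+3k}] = 2 (∏_{l=0}^{k−1} x_{i+3l} x_{i+3l+1}) x_{i+3k+1} v_{i+3k+3}`,
`[v_i, v_{i+3k+1}] = −(∏_{l=0}^{k−1} x_{i+3l} x_{i+3l+1}) x_{i+3k} v_{i+3k+3}`,
`[v_i, v_{i+3k+2}] = −(∏_{l=0}^{k} x_{i+3l} x_{i+3l+1}) x_{i+3k+2} v_{i+3k+5}`,
where the supercommutators of the odd operators `v_i`, `v_j` are anticommutators.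
Here `∂_i` is the contraction characterized by `∂_i x_j + x_j ∂_i = δ_{ij}`, `∂_i(1)=0`,
`∂_i ∂_j + ∂_j ∂_i = 0`, and the pivot operators `v_i` are characterized by the
recursion `v_i = ∂_i + x_i x_{i+1} v_{i+3}` together with the fact that `v_i` kills the
subalgebra generated by the `x_j` with `j < i`.  Products in `Module.End` are
compositions of operators; the ordered products `∏` are `List` products. -/
theorem stmt_17 (K : Type*) [Field K]
    (d v : ℕ → Module.End K (GrassmannAlgebra K))
    (hd : ∀ i j : ℕ, d i * grassMul K j + grassMul K j * d i = if i = j then 1 else 0)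
    (hd1 : ∀ i : ℕ, d i (1 : GrassmannAlgebra K) = 0)
    (hdd : ∀ i j : ℕ, d i * d j + d j * d i = 0)
    (hv : ∀ i : ℕ, v i = d i + grassMul K i * grassMul K (i + 1) * v (i + 3))
    (hv0 : ∀ i : ℕ, ∀ w ∈ Algebra.adjoin K (grassGen K '' {j : ℕ | j < i}), v i w = 0) :
    ∀ i k : ℕ,
      v i * v (i + 3 * k) + v (i + 3 * k) * v i
        = 2 • (((List.range k).map
              (fun l => grassMul K (i + 3 * l) * grassMul K (i + 3 * l + 1))).prod
            * (grassMul K (i + 3 * k + 1) * v (i + 3 * k + 3))) ∧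
      v i * v (i + 3 * k + 1) + v (i + 3 * k + 1) * v i
        = -(((List.range k).map
              (fun l => grassMul K (i + 3 * l) * grassMul K (i + 3 * l + 1))).prod
            * (grassMul K (i + 3 * k) * v (i + 3 * k + 3))) ∧
      v i * v (i + 3 * k + 2) + v (i + 3 * k + 2) * v i
        = -(((List.range (k + 1)).map
              (fun l => grassMul K (i + 3 * l) * grassMul K (i + 3 * l + 1))).prod
            * (grassMul K (i + 3 * k + 2) * v (i + 3 * k + 5))) := by
  intro i k
  induction k generalizing i with
  | zero =>
    simpa using ⟨pivot_anticomm_self d v hd hd1 hdd hv hv0 i,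
      pivot_anticomm_succ d v hd hd1 hdd hv hv0 i, pivot_anticomm_add_two d v hd hd1 hdd hv hv0 i⟩
  | succ k ih =>
    obtain ⟨ihP, ihQ, ihR⟩ := ih (i + 3)
    have hstep {j : ℕ} (hj : i + 3 ≤ j) := pivot_anticomm_of_add_three_le d v hd hd1 hdd hv hv0 hj
    have hprod := List.prod_map_range_succ_step (fun m => grassMul K m * grassMul K (m + 1)) 3 i
    rw [show i + 3 * (k + 1) = i + 3 + 3 * k by ring, hprod, hprod]
    refine ⟨?_, ?_, ?_⟩
    · rw [hstep (by omega), ihP, mul_smul_comm, mul_assoc (_ * _)]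
    · rw [hstep (by omega), ihQ, mul_neg (α := Module.End K (GrassmannAlgebra K)),
        mul_assoc (_ * _)]
    · rw [hstep (by omega), ihR, mul_neg (α := Module.End K (GrassmannAlgebra K)),
        mul_assoc (_ * _)]
end
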